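/- Let Γ be a generalized quadrangle and O a set of regular points of Γ satisfying: (PP) at least one member of O is projective; (TP) for all opposite points x,y of Γ, |{x,y}^⊥ ∩ O| ≠ 1. Then every element of O is a projective point. -/

import Mathlib

/-- A (thick) generalized quadrangle. -/
structure GenQuadrangle where
  P : Type
  Ln : Type
  inc : P → Ln → Prop
  /-- (PL): no pair of distinct points is incident with a pair of distinct lines -/
  pl : ∀ ⦃x y : P⦄ ⦃l m : Ln⦄, inc x l → inc y l → inc x m → inc y m → x = y ∨ l = m
  /-- thickness: every point is incident with at least three lines -/
  thickPt : ∀ x : P, ∃ l₁ l₂ l₃ : Ln, l₁ ≠ l₂ ∧ l₁ ≠ l₃ ∧ l₂ ≠ l₃ ∧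
    inc x l₁ ∧ inc x l₂ ∧ inc x l₃
  /-- thickness: every line is incident with at least three points -/
  thickLn : ∀ l : Ln, ∃ x₁ x₂ x₃ : P, x₁ ≠ x₂ ∧ x₁ ≠ x₃ ∧ x₂ ≠ x₃ ∧
    inc x₁ l ∧ inc x₂ l ∧ inc x₃ l
  /-- (GQ): for every non-incident point-line pair (x,l) there are a unique point y
  and a unique line m with x I m I y I l -/
  gq : ∀ (x : P) (l : Ln), ¬ inc x l → ∃! q : P × Ln, inc x q.2 ∧ inc q.1 q.2 ∧ inc q.1 l

namespace GenQuadrangle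

variable (G : GenQuadrangle)

/-- Two points are collinear if some line is incident with both. -/
def collinear (x y : G.P) : Prop := ∃ l : G.Ln, G.inc x l ∧ G.inc y l

/-- Two points are opposite if they are not collinear. -/
def opp (x y : G.P) : Prop := ¬ G.collinear x y

/-- The perp {x,y}^⊥ of a pair of points. -/
def perp (x y : G.P) : Set G.P := {z | G.collinear z x ∧ G.collinear z y}

/-- X^⊥ for a set of points X. -/
def perpSet (S : Set G.P) : Set G.P := {z | ∀ u ∈ S, G.collinear z u}

/-- The span {x,y}^⊥⊥ of a pair of points. -/
def span (x y : G.P) : Set G.P := G.perpSet (G.perp x y)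

/-- A point x is regular if every span {x,y}^⊥⊥ (y opposite x) is a perp of a pair
of opposite points. -/
def regular (x : G.P) : Prop :=
  ∀ y : G.P, G.opp x y → ∃ u v : G.P, G.opp u v ∧ G.span x y = G.perp u v

/-- A point x is projective if it is regular and every pair of distinct perps
through x meets in a unique point (i.e. the dual net Γ*_x is a dual affine plane). -/
def projective (x : G.P) : Prop :=
  G.regular x ∧ ∀ y z : G.P, G.opp x y → G.opp x z → G.perp x y ≠ G.perp x z →
    ∃! w : G.P, w ∈ G.perp x y ∧ w ∈ G.perp x z

/-- A triad: three pairwise opposite points. -/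
def triad (x y z : G.P) : Prop := G.opp x y ∧ G.opp y z ∧ G.opp x z

/-- A center of a triad: a point collinear with all three. -/
def center (w x y z : G.P) : Prop := G.collinear w x ∧ G.collinear w y ∧ G.collinear w z

end GenQuadrangle

/-!
A regular point opposite a projective point is projective. Given the projective point `p ∈ O`
and `q ∈ O` collinear with `p`, (TP) applied to a pair `x, y` with `p ∈ {x,y}^⊥` and `x` on the
line `pq` yields a second point `r ∈ O` of `{x,y}^⊥`, opposite both `p` and `q`; projectivity then
passes `p → r → q`.

For the first fact: every span `{y,a}^⊥⊥` meets `x^⊥`, so each perp `{y,a}^⊥` can be written as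
`{y,z}^⊥` with `z ~ x`, and for two such points `z₁, z₂` the dual affine plane at `x` provides
the unique common neighbour of `y, z₁, z₂`.
-/

namespace GenQuadrangle

variable {G : GenQuadrangle}

theorem collinear.symm {x y : G.P} (h : G.collinear x y) : G.collinear y x :=
  let ⟨l, hx, hy⟩ := h
  ⟨l, hy, hx⟩

theorem opp.symm {x y : G.P} (h : G.opp x y) : G.opp y x := fun h' => h h'.symm

theorem line_eq {x y : G.P} {l m : G.Ln} (hxy : x ≠ y) (hxl : G.inc x l) (hyl : G.inc y l)
    (hxm : G.inc x m) (hym : G.inc y m) : l = m :=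
  (G.pl hxl hyl hxm hym).resolve_left hxy

theorem exists_inc_collinear {p : G.P} {l : G.Ln} (hp : ¬ G.inc p l) :
    ∃ a, G.inc a l ∧ G.collinear a p := by
  obtain ⟨⟨a, m⟩, ⟨hpm, ham, hal⟩, -⟩ := G.gq p l hp
  exact ⟨a, hal, m, ham, hpm⟩

theorem eq_of_inc_of_collinear {p a b : G.P} {l : G.Ln} (hp : ¬ G.inc p l) (ha : G.inc a l)
    (hb : G.inc b l) (hap : G.collinear a p) (hbp : G.collinear b p) : a = b := by
  obtain ⟨_, -, hq⟩ := G.gq p l hp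
  obtain ⟨m, ham, hpm⟩ := hap
  obtain ⟨n, hbn, hpn⟩ := hbp
  exact congrArg Prod.fst ((hq (a, m) ⟨hpm, ham, ha⟩).trans (hq (b, n) ⟨hpn, hbn, hb⟩).symm)

theorem exists_line_ne (x : G.P) (l : G.Ln) : ∃ m, G.inc x m ∧ m ≠ l := by
  obtain ⟨l₁, l₂, -, h₁₂, -, -, h₁, h₂, -⟩ := G.thickPt x
  by_cases e : l₁ = l
  · exact ⟨l₂, h₂, fun e₂ => h₁₂ (e.trans e₂.symm)⟩
  · exact ⟨l₁, h₁, e⟩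

theorem exists_point_ne (l : G.Ln) (p q : G.P) : ∃ z, G.inc z l ∧ z ≠ p ∧ z ≠ q := by
  obtain ⟨x₁, x₂, x₃, h₁₂, h₁₃, h₂₃, h₁, h₂, h₃⟩ := G.thickLn l
  by_contra! h
  have hpq : ∀ z, G.inc z l → z = p ∨ z = q := fun z hz => or_iff_not_imp_left.2 (h z hz)
  rcases hpq x₁ h₁ with rfl | rfl <;> rcases hpq x₂ h₂ with rfl | rfl <;>
    rcases hpq x₃ h₃ with rfl | rfl <;> contradiction

theorem opp_of_inc {p a b : G.P} {m n : G.Ln} (hpm : G.inc p m) (hpn : G.inc p n)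
    (ham : G.inc a m) (hbn : G.inc b n) (hmn : m ≠ n) (hap : a ≠ p) (hbp : b ≠ p) :
    G.opp a b := by
  rintro ⟨k, hak, hbk⟩
  have hpk : ¬ G.inc p k := fun hpk =>
    hmn ((line_eq hap ham hpm hak hpk).trans (line_eq hbp hbn hpn hbk hpk).symm)
  obtain rfl : a = b := eq_of_inc_of_collinear hpk hak hbk ⟨m, ham, hpm⟩ ⟨n, hbn, hpn⟩
  exact hmn (line_eq hap ham hpm hbn hpn)

theorem opp_of_mem_perp {u v z z' : G.P} (huv : G.opp u v) (hz : z ∈ G.perp u v)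
    (hz' : z' ∈ G.perp u v) (hne : z ≠ z') : G.opp z z' := by
  rintro ⟨m, hzm, hz'm⟩
  have hm : ∀ w, G.collinear z w → G.collinear z' w → G.inc w m := fun w hw hw' => by
    by_contra hwm
    exact hne (eq_of_inc_of_collinear hwm hzm hz'm hw hw')
  exact huv ⟨m, hm u hz.1 hz'.1, hm v hz.2 hz'.2⟩

theorem exists_mem_perp_ne {u v : G.P} (huv : G.opp u v) (a : G.P) :
    ∃ w ∈ G.perp u v, w ≠ a := by
  obtain ⟨l₁, l₂, -, h₁₂, -, -, h₁, h₂, -⟩ := G.thickPt u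
  obtain ⟨w₁, hw₁l, hw₁v⟩ := exists_inc_collinear fun hv : G.inc v l₁ => huv ⟨l₁, h₁, hv⟩
  obtain ⟨w₂, hw₂l, hw₂v⟩ := exists_inc_collinear fun hv : G.inc v l₂ => huv ⟨l₂, h₂, hv⟩
  by_cases e : w₁ = a
  · refine ⟨w₂, ⟨⟨l₂, hw₂l, h₂⟩, hw₂v⟩, fun e₂ => ?_⟩
    have hw₁u : w₁ ≠ u := fun h => huv (h ▸ hw₁v)
    exact h₁₂ (line_eq hw₁u hw₁l h₁ ((e.trans e₂.symm) ▸ hw₂l) h₂)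
  · exact ⟨w₁, ⟨⟨l₁, hw₁l, h₁⟩, hw₁v⟩, e⟩

theorem perp_eq_of_subset {y a b : G.P} (hya : G.opp y a) (hyb : G.opp y b)
    (hsub : G.perp y a ⊆ G.perp y b) : G.perp y a = G.perp y b := by
  refine hsub.antisymm fun w hw => ?_
  obtain ⟨l, hwl, hyl⟩ := hw.1
  obtain ⟨w₀, hw₀l, hw₀a⟩ := exists_inc_collinear fun hal : G.inc a l => hya ⟨l, hyl, hal⟩
  have hw₀ : w₀ ∈ G.perp y a := ⟨⟨l, hw₀l, hyl⟩, hw₀a⟩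
  have hbl : ¬ G.inc b l := fun hbl => hyb ⟨l, hyl, hbl⟩
  obtain rfl : w = w₀ := eq_of_inc_of_collinear hbl hwl hw₀l hw.2 (hsub hw₀).2
  exact hw₀

theorem opp_and_perp_eq_of_mem_span {y c z : G.P} (hyc : G.opp y c) (hz : z ∈ G.span y c)
    (hzy : z ≠ y) : G.opp y z ∧ G.perp y z = G.perp y c := by
  have hyz : G.opp y z := by
    rintro ⟨l, hyl, hzl⟩
    obtain ⟨l', hyl', hl'⟩ := exists_line_ne y l
    obtain ⟨w, hwl', hwc⟩ := exists_inc_collinear fun hcl' : G.inc c l' => hyc ⟨l', hyl', hcl'⟩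
    have hzl' : ¬ G.inc z l' := fun hzl' => hl' (line_eq hzy hzl' hyl' hzl hyl)
    obtain rfl : w = y :=
      eq_of_inc_of_collinear hzl' hwl' hyl' (hz w ⟨⟨l', hwl', hyl'⟩, hwc⟩).symm ⟨l, hyl, hzl⟩
    exact hyc hwc
  exact ⟨hyz, (perp_eq_of_subset hyc hyz fun w hw => ⟨hw.1, (hz w hw).symm⟩).symm⟩

theorem perp_ne_perp_of_collinear {x y u v : G.P} (hxy : G.opp x y) (huy : G.collinear u y)
    (hvy : G.collinear v y) (huv : G.opp u v) : G.perp x u ≠ G.perp x v := by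
  intro he
  obtain ⟨f, huf, hyf⟩ := huy
  obtain ⟨k, hkf, hkx⟩ := exists_inc_collinear fun hxf : G.inc x f => hxy ⟨f, hxf, hyf⟩
  have hk : k ∈ G.perp x v := he ▸ (⟨hkx, f, hkf, huf⟩ : k ∈ G.perp x u)
  have hvf : ¬ G.inc v f := fun hvf => huv ⟨f, huf, hvf⟩
  obtain rfl : k = y := eq_of_inc_of_collinear hvf hkf hyf hk.2 hvy.symm
  exact hxy hkx.symm

theorem exists_mem_perp_collinear_of_collinear {u v x : G.P} (huv : G.opp u v)
    (hux : G.collinear u x) : ∃ z ∈ G.perp u v, G.collinear z x := by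
  obtain ⟨e, hue, hxe⟩ := hux
  obtain ⟨z, hze, hzv⟩ := exists_inc_collinear fun hve : G.inc v e => huv ⟨e, hue, hve⟩
  exact ⟨z, ⟨⟨e, hze, hue⟩, hzv⟩, e, hze, hxe⟩

namespace projective

variable {x y : G.P}

theorem perp_eq {c d w₁ w₂ : G.P} (hx : G.projective x) (hc : G.opp x c) (hd : G.opp x d)
    (h₁ : w₁ ∈ G.perp x c ∩ G.perp x d) (h₂ : w₂ ∈ G.perp x c ∩ G.perp x d) (hne : w₁ ≠ w₂) :
    G.perp x c = G.perp x d := by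
  by_contra hcd
  obtain ⟨w, -, hw⟩ := hx.2 c d hc hd hcd
  exact hne ((hw w₁ h₁).trans (hw w₂ h₂).symm)

theorem exists_mem_perp_collinear {u v : G.P} (hx : G.projective x) (hxy : G.opp x y)
    (huv : G.opp u v) (huy : G.collinear u y) (hvy : G.collinear v y) :
    ∃ z ∈ G.perp u v, G.collinear z x := by
  by_cases hux : G.collinear u x
  · exact exists_mem_perp_collinear_of_collinear huv hux
  by_cases hvx : G.collinear v x
  · obtain ⟨z, hz, hzx⟩ := exists_mem_perp_collinear_of_collinear huv.symm hvx
    exact ⟨z, ⟨hz.2, hz.1⟩, hzx⟩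
  obtain ⟨z, ⟨hzu, hzv⟩, -⟩ := hx.2 u v (fun h => hux h.symm) (fun h => hvx h.symm)
    (perp_ne_perp_of_collinear hxy huy hvy huv)
  exact ⟨z, ⟨hzu.2, hzv.2⟩, hzu.1⟩

theorem exists_mem_span_collinear {a : G.P} (hx : G.projective x) (hxy : G.opp x y)
    (hy : G.regular y) (hya : G.opp y a) : ∃ z ∈ G.span y a, G.collinear z x := by
  obtain ⟨u, v, huv, hspan⟩ := hy a hya
  have hy' : y ∈ G.perp u v := by
    rw [← hspan]
    exact fun w hw => hw.1.symm
  rw [hspan]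
  exact hx.exists_mem_perp_collinear hxy huv hy'.1.symm hy'.2.symm

theorem exists_mem_perp_inter_of_opp {z₁ z₂ : G.P} (hx : G.projective x) (hxy : G.opp x y)
    (h₁ : G.collinear z₁ x) (h₂ : G.collinear z₂ x) (hy₁ : G.opp y z₁) (h₁₂ : G.opp z₁ z₂) :
    ∃ θ, θ ∈ G.perp y z₁ ∩ G.perp y z₂ := by
  obtain ⟨w, hw, hwx⟩ := exists_mem_perp_ne h₁₂ x
  have hxw : G.opp x w := opp_of_mem_perp h₁₂ ⟨h₁.symm, h₂.symm⟩ hw hwx.symm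
  have hz₁w : z₁ ∈ G.perp x w := ⟨h₁, hw.1.symm⟩
  -- `{x,w}^⊥` is the perp through `z₁, z₂`; `θ` is taken on the line joining `y` to its meet `s`
  -- with `{x,y}^⊥`
  obtain ⟨s, ⟨hsy, hsw⟩, -⟩ := hx.2 y w hxy hxw fun he => hy₁ (he ▸ hz₁w).2.symm
  have hsz₁ : s ≠ z₁ := by
    rintro rfl
    exact hy₁ hsy.2.symm
  obtain ⟨f, hsf, hyf⟩ := hsy.2
  obtain ⟨θ, hθf, hθz₁⟩ := exists_inc_collinear fun hz₁f : G.inc z₁ f => hy₁ ⟨f, hyf, hz₁f⟩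
  -- `θ ~ x` would make `θ` the projection `s` of `x` on `f`, but `s` and `z₁` are opposite
  have hxθ : G.opp x θ := by
    intro hxθ
    have hxf : ¬ G.inc x f := fun hxf => hxy ⟨f, hxf, hyf⟩
    obtain rfl : θ = s := eq_of_inc_of_collinear hxf hθf hsf hxθ.symm hsy.1
    exact opp_of_mem_perp hxw hsw hz₁w hsz₁ hθz₁
  have hθw : G.perp x θ = G.perp x w :=
    hx.perp_eq hxθ hxw ⟨⟨h₁, hθz₁.symm⟩, hz₁w⟩ ⟨⟨hsy.1, f, hsf, hθf⟩, hsw⟩ hsz₁.symm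
  have hz₂ : z₂ ∈ G.perp x θ := hθw ▸ ⟨h₂, hw.2.symm⟩
  exact ⟨θ, ⟨⟨f, hθf, hyf⟩, hθz₁⟩, ⟨f, hθf, hyf⟩, hz₂.2.symm⟩

theorem exists_mem_perp_inter {z₁ z₂ : G.P} (hx : G.projective x) (hxy : G.opp x y)
    (h₁ : G.collinear z₁ x) (h₂ : G.collinear z₂ x) (hy₁ : G.opp y z₁) :
    ∃ θ, θ ∈ G.perp y z₁ ∩ G.perp y z₂ := by
  by_cases h₁₂ : G.collinear z₁ z₂
  · obtain ⟨l, h₁l, h₂l⟩ := h₁₂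
    obtain ⟨θ, hθl, hθy⟩ := exists_inc_collinear fun hyl : G.inc y l => hy₁ ⟨l, hyl, h₁l⟩
    exact ⟨θ, ⟨hθy, l, hθl, h₁l⟩, hθy, l, hθl, h₂l⟩
  · exact hx.exists_mem_perp_inter_of_opp hxy h₁ h₂ hy₁ h₁₂

theorem eq_of_mem_perp_inter {z₁ z₂ θ θ' : G.P} (hx : G.projective x) (hxy : G.opp x y)
    (h₁ : G.collinear z₁ x) (h₂ : G.collinear z₂ x) (hy₁ : G.opp y z₁) (h₁₂ : z₁ ≠ z₂)
    (hθ : θ ∈ G.perp y z₁ ∩ G.perp y z₂) (hθ' : θ' ∈ G.perp y z₁ ∩ G.perp y z₂) : θ = θ' := by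
  by_cases hc : G.collinear z₁ z₂
  · obtain ⟨l, h₁l, h₂l⟩ := hc
    have hl : ∀ {t}, t ∈ G.perp y z₁ ∩ G.perp y z₂ → G.inc t l := fun ht => by
      by_contra htl
      exact h₁₂ (eq_of_inc_of_collinear htl h₁l h₂l ht.1.2.symm ht.2.2.symm)
    have hyl : ¬ G.inc y l := fun hyl => hy₁ ⟨l, hyl, h₁l⟩
    exact eq_of_inc_of_collinear hyl (hl hθ) (hl hθ') hθ.1.1 hθ'.1.1
  by_contra hne
  have hmem : ∀ {t}, t ∈ G.perp y z₁ ∩ G.perp y z₂ → t ∈ G.perp z₁ z₂ :=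
    fun ht => ⟨ht.1.2, ht.2.2⟩
  have hxt : ∀ {t}, t ∈ G.perp y z₁ ∩ G.perp y z₂ → G.opp x t := fun ht =>
    opp_of_mem_perp hc ⟨h₁.symm, h₂.symm⟩ (hmem ht) fun e => hxy (e ▸ ht.1.1)
  exact perp_ne_perp_of_collinear hxy hθ.1.1 hθ'.1.1 (opp_of_mem_perp hc (hmem hθ) (hmem hθ') hne)
    (hx.perp_eq (hxt hθ) (hxt hθ') ⟨⟨h₁, hθ.1.2.symm⟩, h₁, hθ'.1.2.symm⟩
      ⟨⟨h₂, hθ.2.2.symm⟩, h₂, hθ'.2.2.symm⟩ h₁₂)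

end projective

theorem projective_of_opp_of_regular {x y : G.P} (hx : G.projective x) (hxy : G.opp x y)
    (hy : G.regular y) : G.projective y := by
  refine ⟨hy, fun a b hya hyb hab => ?_⟩
  have hzy : ∀ {z}, G.collinear z x → z ≠ y := fun hzx e => hxy (e ▸ hzx).symm
  obtain ⟨z₁, hz₁, hz₁x⟩ := hx.exists_mem_span_collinear hxy hy hya
  obtain ⟨z₂, hz₂, hz₂x⟩ := hx.exists_mem_span_collinear hxy hy hyb
  obtain ⟨hyz₁, e₁⟩ := opp_and_perp_eq_of_mem_span hya hz₁ (hzy hz₁x)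
  obtain ⟨-, e₂⟩ := opp_and_perp_eq_of_mem_span hyb hz₂ (hzy hz₂x)
  rw [← e₁, ← e₂] at hab ⊢
  exact existsUnique_of_exists_of_unique (hx.exists_mem_perp_inter hxy hz₁x hz₂x hyz₁)
    fun _ _ => hx.eq_of_mem_perp_inter hxy hz₁x hz₂x hyz₁ (ne_of_apply_ne (G.perp y) hab)

theorem exists_mem_opp_opp_of_collinear {O : Set G.P}
    (hTP : ∀ x y : G.P, G.opp x y → ¬ ∃! z : G.P, z ∈ G.perp x y ∧ z ∈ O)
    {q s : G.P} (hq : q ∈ O) (hqs : G.collinear q s) : ∃ r ∈ O, G.opp r q ∧ G.opp r s := by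
  obtain ⟨m, hqm, hsm⟩ := hqs
  obtain ⟨x, hxm, hxq, hxs⟩ := exists_point_ne m q s
  obtain ⟨n, hqn, hnm⟩ := exists_line_ne q m
  obtain ⟨y, hyn, hyq, -⟩ := exists_point_ne n q q
  have hxy : G.opp x y := opp_of_inc hqm hqn hxm hyn hnm.symm hxq hyq
  have hq' : q ∈ G.perp x y := ⟨⟨m, hqm, hxm⟩, n, hqn, hyn⟩
  obtain ⟨r, ⟨hr, hrO⟩, hrq⟩ : ∃ r, (r ∈ G.perp x y ∧ r ∈ O) ∧ r ≠ q := by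
    by_contra! h
    exact hTP x y hxy ⟨q, ⟨hq', hq⟩, h⟩
  have hrq' : G.opp r q := opp_of_mem_perp hxy hr hq' hrq
  refine ⟨r, hrO, hrq', fun hrs => ?_⟩
  have hrm : ¬ G.inc r m := fun hrm => hrq' ⟨m, hrm, hqm⟩
  exact hxs (eq_of_inc_of_collinear hrm hxm hsm hr.1.symm hrs.symm)

end GenQuadrangle

/-- Let Γ be a generalized quadrangle and O a set of regular points
satisfying (PP): at least one member of O is projective, and (TP): for all opposite
points x,y, |{x,y}^⊥ ∩ O| ≠ 1. Then every element of O is a projective point. -/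
theorem all_points_of_O_projective
    (G : GenQuadrangle) (O : Set G.P)
    (hreg : ∀ p ∈ O, G.regular p)
    -- (PP)
    (hPP : ∃ p ∈ O, G.projective p)
    -- (TP): |{x,y}^⊥ ∩ O| ≠ 1
    (hTP : ∀ x y : G.P, G.opp x y → ¬ ∃! z : G.P, z ∈ G.perp x y ∧ z ∈ O) :
    ∀ p ∈ O, G.projective p := by
  obtain ⟨p, hpO, hp⟩ := hPP
  have spread : ∀ {x y}, G.projective x → G.opp x y → y ∈ O → G.projective y :=
    fun hx hxy hyO => GenQuadrangle.projective_of_opp_of_regular hx hxy (hreg _ hyO)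
  intro q hqO
  by_cases hpq : G.opp p q
  · exact spread hp hpq hqO
  · obtain ⟨r, hrO, hrp, hrq⟩ :=
      GenQuadrangle.exists_mem_opp_opp_of_collinear hTP hpO (not_not.mp hpq)
    exact spread (spread hp hrp.symm hrO) hrq hqO
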